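/- arXiv:1012.1016 — 4 statements merged into one kernel-verified Lean document; each statement's English description precedes it below -/
import Mathlib

section
/- Let K be an algebraically closed field, n ≥ 2 and 1 ≤ d ≤ n−1, and let C be an (n−d)×n matrix over K of rank n−d. An n×n matrix A over K has a nonzero eigenvector (for some eigenvalue in K) lying in the d-dimensional subspace L = ker C of K^n if and only if the Kalman matrix of A has rank strictly less than n, i.e., if and only if all n×n minors of the Kalman matrix of A vanish. -/
open Matrix

/-- The Kalman matrix of `A` with respect to `C`: the `((d+1)(n-d)) × n` matrix obtained by
vertically stacking the blocks `C * A ^ i` for `i = 0, 1, …, d`; the row indexed by `(i, r)`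
is the `r`-th row of `C * A ^ i`. -/
noncomputable def kalmanMatrix {K : Type*} [CommRing K] {n d : ℕ}
    (C : Matrix (Fin (n - d)) (Fin n) K) (A : Matrix (Fin n) (Fin n) K) :
    Matrix (Fin (d + 1) × Fin (n - d)) (Fin n) K :=
  fun p j => (C * A ^ (p.1 : ℕ)) p.2 j

/-!
If `v ≠ 0` lies in the kernel of the Kalman matrix, then `v, A v, …, A ^ d v` are `d + 1` vectors
of the `d`-dimensional space `L = ker C`, so `p(A) v = 0` for some nonzero polynomial `p` of degree
at most `d`. Splitting `p` into linear factors over the algebraically closed field, some divisor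
`q` of `p` has `q(A) v ≠ 0` while `(A - μ) q(A) v = 0` for a root `μ` of `p`; the eigenvector
`q(A) v` lies in `L` because `deg q ≤ d`. Conversely, an eigenvector `w ∈ L` has
`A ^ i w = μ ^ i w ∈ L`. The minor criterion is the usual description of full column rank.
-/

open Module Polynomial

namespace Module.End

variable {K V : Type*} [Field K] [AddCommGroup V] [Module K V]

theorem exists_dvd_hasEigenvector_aeval_apply_of_prod_X_sub_C (f : End K V) {v : V}
    (hv : v ≠ 0) (s : Multiset K) (hs : aeval f (s.map (X - C ·)).prod v = 0) :
    ∃ q, q ∣ (s.map (X - C ·)).prod ∧ ∃ μ, f.HasEigenvector μ (aeval f q v) := by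
  induction s using Multiset.induction_on with
  | empty => simp [hv] at hs
  | cons a s ih =>
    rw [Multiset.map_cons, Multiset.prod_cons] at hs ⊢
    by_cases hsv : aeval f (s.map (X - C ·)).prod v = 0
    · obtain ⟨q, hq, μ, hμ⟩ := ih hsv
      exact ⟨q, hq.mul_left _, μ, hμ⟩
    · refine ⟨_, dvd_mul_left _ _, a, mem_eigenspace_iff.2 ?_, hsv⟩
      rw [aeval_mul, mul_apply, map_sub, aeval_X, aeval_C,
        LinearMap.sub_apply, sub_eq_zero] at hs
      simpa using hs

theorem exists_dvd_hasEigenvector_aeval_apply [IsAlgClosed K] (f : End K V) {v : V}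
    (hv : v ≠ 0) {p : K[X]} (hp : p ≠ 0) (hpv : aeval f p v = 0) :
    ∃ q, q ∣ p ∧ ∃ μ, f.HasEigenvector μ (aeval f q v) := by
  rw [← C_leadingCoeff_mul_prod_multiset_X_sub_C (p := p) IsAlgClosed.card_roots_eq_natDegree,
    aeval_mul, mul_apply, aeval_C, algebraMap_end_apply, smul_eq_zero,
    or_iff_right (leadingCoeff_ne_zero.2 hp)] at hpv
  obtain ⟨q, hq, μ, hμ⟩ := exists_dvd_hasEigenvector_aeval_apply_of_prod_X_sub_C f hv _ hpv
  exact ⟨q, hq.trans (prod_multiset_X_sub_C_dvd p), μ, hμ⟩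

theorem aeval_apply_mem_of_mem_degreeLT (f : End K V) {L : Submodule K V} {v : V} {d : ℕ}
    (h : ∀ i < d, (f ^ i) v ∈ L) {p : K[X]} (hp : p ∈ K[X]_d) : aeval f p v ∈ L := by
  have : K[X]_d ≤ L.comap ((LinearMap.applyₗ v).comp (aeval f).toLinearMap) := by
    classical
    rw [degreeLT_eq_span_X_pow, Submodule.span_le]
    intro q hq
    obtain ⟨i, hi, rfl⟩ := Finset.mem_image.1 hq
    simpa using h i (Finset.mem_range.1 hi)
  exact this hp

theorem exists_hasEigenvector_mem_iff_exists_pow_apply_mem [IsAlgClosed K] [FiniteDimensional K V]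
    (f : End K V) {L : Submodule K V} {d : ℕ} (hL : finrank K L ≤ d) :
    (∃ μ, ∃ w ∈ L, f.HasEigenvector μ w) ↔ ∃ v ≠ 0, ∀ i ≤ d, (f ^ i) v ∈ L := by
  refine ⟨fun ⟨μ, w, hwL, hw⟩ => ⟨w, hw.2, fun i _ => ?_⟩, fun ⟨v, hv, hfv⟩ => ?_⟩
  · rw [hw.pow_apply]
    exact L.smul_mem _ hwL
  · have hfv' : ∀ i < d + 1, (f ^ i) v ∈ L := fun i hi => hfv i (Nat.lt_succ_iff.1 hi)
    let Φ : K[X]_(d + 1) →ₗ[K] L := LinearMap.codRestrict L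
      ((LinearMap.applyₗ v).comp ((aeval f).toLinearMap.comp (K[X]_(d + 1)).subtype))
      fun p => aeval_apply_mem_of_mem_degreeLT f hfv' p.2
    have hΦ : LinearMap.ker Φ ≠ ⊥ := LinearMap.ker_ne_bot_of_finrank_lt <| by
      rw [finrank_eq_card_basis (degreeLT.basis K (d + 1)), Fintype.card_fin]
      omega
    obtain ⟨⟨p, hpd⟩, hpΦ, hp⟩ := Submodule.ne_bot_iff _ |>.1 hΦ
    have hp0 : p ≠ 0 := by simpa using hp
    obtain ⟨q, hqp, μ, hμ⟩ := exists_dvd_hasEigenvector_aeval_apply f hv hp0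
      (congrArg Subtype.val (LinearMap.mem_ker.1 hpΦ))
    have hqd : q ∈ K[X]_(d + 1) :=
      mem_degreeLT.2 <| (degree_le_of_dvd hqp hp0).trans_lt (mem_degreeLT.1 hpd)
    exact ⟨μ, _, aeval_apply_mem_of_mem_degreeLT f hfv' hqd, hμ⟩

end Module.End

namespace Matrix

variable {K m n : Type*} [Field K] [Fintype n]

theorem rank_lt_card_iff_exists_mulVec_eq_zero (M : Matrix m n K) :
    M.rank < Fintype.card n ↔ ∃ v ≠ 0, M *ᵥ v = 0 := by
  have hnullity := LinearMap.finrank_range_add_finrank_ker M.mulVecLin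
  rw [finrank_fintype_fun_eq_card] at hnullity
  rw [rank, ← hnullity, Nat.lt_add_right_iff_pos, Nat.lt_iff_add_one_le, zero_add,
    Submodule.one_le_finrank_iff, Submodule.ne_bot_iff]
  simp only [LinearMap.mem_ker, mulVecLin_apply]
  exact ⟨fun ⟨v, hv, hv0⟩ => ⟨v, hv0, hv⟩, fun ⟨v, hv0, hv⟩ => ⟨v, hv, hv0⟩⟩

theorem exists_det_submatrix_ne_zero_of_rank_eq_card [Finite m] [DecidableEq n]
    (M : Matrix m n K) (hM : M.rank = Fintype.card n) : ∃ r : n → m, (M.submatrix r id).det ≠ 0 := by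
  obtain ⟨κ, a, -, hspan, hli⟩ := exists_linearIndependent' K M.row
  have := hli.finite
  have := Fintype.ofFinite κ
  have hκ : Fintype.card κ = Fintype.card n := by
    rw [← finrank_span_eq_card hli, hspan, ← rank_eq_finrank_span_row, hM]
  let e : n ≃ κ := Fintype.equivOfCardEq hκ.symm
  refine ⟨a ∘ e, ?_⟩
  rw [← isUnit_iff_ne_zero, ← isUnit_iff_isUnit_det, ← linearIndependent_rows_iff_isUnit]
  exact hli.comp e e.injective

theorem rank_lt_card_iff_forall_det_submatrix_eq_zero [Finite m] [DecidableEq n]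
    (M : Matrix m n K) :
    M.rank < Fintype.card n ↔ ∀ r : n → m, (M.submatrix r id).det = 0 := by
  refine ⟨fun hM r => ?_, fun h => ?_⟩
  · by_contra hdet
    have := (rank_of_det_ne_zero hdet).symm.trans_le (M.rank_submatrix_le r id)
    omega
  · by_contra hM
    obtain ⟨r, hr⟩ := M.exists_det_submatrix_ne_zero_of_rank_eq_card
      (M.rank_le_card_width.antisymm (not_lt.1 hM))
    exact hr (h r)

end Matrix

theorem kalmanMatrix_mulVec_eq_zero_iff {K : Type*} [CommRing K] {n d : ℕ}
    (C : Matrix (Fin (n - d)) (Fin n) K) (A : Matrix (Fin n) (Fin n) K) (v : Fin n → K) :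
    kalmanMatrix C A *ᵥ v = 0 ↔ ∀ i ≤ d, C *ᵥ (A ^ i *ᵥ v) = 0 := by
  have hblock : ∀ p, (kalmanMatrix C A *ᵥ v) p = (C *ᵥ (A ^ (p.1 : ℕ) *ᵥ v)) p.2 := fun p => by
    rw [mulVec_mulVec]
    rfl
  simp only [funext_iff, Prod.forall, hblock, Pi.zero_apply, Fin.forall_iff, Nat.lt_succ_iff]

theorem stmt0_general {K : Type*} [Field K] [IsAlgClosed K] (n d : ℕ)
    (C : Matrix (Fin (n - d)) (Fin n) K) (hC : C.rank = n - d)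
    (A : Matrix (Fin n) (Fin n) K) :
    ((∃ v : Fin n → K, v ≠ 0 ∧ C.mulVec v = 0 ∧ ∃ μ : K, A.mulVec v = μ • v)
      ↔ (kalmanMatrix C A).rank < n)
    ∧ ((kalmanMatrix C A).rank < n ↔
        ∀ r : Fin n → Fin (d + 1) × Fin (n - d),
          ((kalmanMatrix C A).submatrix r id).det = 0) := by
  have hker : finrank K (LinearMap.ker (toLin' C)) ≤ d := by
    have := LinearMap.finrank_range_add_finrank_ker (toLin' C)
    rw [finrank_fin_fun] at this
    change C.rank + _ = n at this
    omega
  have key := Module.End.exists_hasEigenvector_mem_iff_exists_pow_apply_mem (toLin' A) hker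
  simp only [← toLin'_pow, toLin'_apply, LinearMap.mem_ker, Module.End.hasEigenvector_iff,
    Module.End.mem_eigenspace_iff] at key
  have hrank := (kalmanMatrix C A).rank_lt_card_iff_exists_mulVec_eq_zero
  rw [Fintype.card_fin] at hrank
  refine ⟨?_, by simpa only [Fintype.card_fin] using (kalmanMatrix C A).rank_lt_card_iff_forall_det_submatrix_eq_zero⟩
  rw [hrank]
  simp only [kalmanMatrix_mulVec_eq_zero_iff, ← key]
  exact ⟨fun ⟨v, hv, hCv, μ, hAv⟩ => ⟨μ, v, hCv, hAv, hv⟩,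
    fun ⟨μ, v, hCv, hAv, hv⟩ => ⟨v, hv, hCv, μ, hAv⟩⟩

/-- An `n × n` matrix `A` over an algebraically closed field has a nonzero eigenvector in the
`d`-dimensional subspace `L = ker C` if and only if the Kalman matrix has rank `< n`, if and
only if all `n × n` minors of the Kalman matrix vanish. -/
theorem stmt0 {K : Type*} [Field K] [IsAlgClosed K] (n d : ℕ)
    (hn : 2 ≤ n) (hd1 : 1 ≤ d) (hd2 : d ≤ n - 1)
    (C : Matrix (Fin (n - d)) (Fin n) K) (hC : C.rank = n - d)
    (A : Matrix (Fin n) (Fin n) K) :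
    ((∃ v : Fin n → K, v ≠ 0 ∧ C.mulVec v = 0 ∧ ∃ μ : K, A.mulVec v = μ • v)
      ↔ (kalmanMatrix C A).rank < n)
    ∧ ((kalmanMatrix C A).rank < n ↔
        ∀ r : Fin n → Fin (d + 1) × Fin (n - d),
          ((kalmanMatrix C A).submatrix r id).det = 0) :=
  stmt0_general n d C hC A
end

section
/- Let K be an algebraically closed field, n ≥ 2, 1 ≤ d ≤ n−1, and let C be an (n−d)×n matrix over K of rank n−d with L = ker C. For every 1 ≤ s ≤ d, an n×n matrix A over K has an A-invariant linear subspace of dimension at least s contained in L if and only if the Kalman matrix of A has rank at most n−s, i.e., if and only if all (n−s+1)×(n−s+1) minors of the Kalman matrix of A vanish. -/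
open Matrix

open Module Submodule

/-! For `k : ℕ` let `N k = ⋂_{i ≤ k} ker (C Aⁱ)` (the unobservable subspace of control theory),
so that `N d` is the kernel of the Kalman matrix. An `A`-invariant subspace inside `ker C` lies in
every `N k`. Conversely `N (k + 1) = ker C ⊓ A⁻¹(N k)`, so the decreasing chain
`ker C = N 0 ⊇ N 1 ⊇ ⋯` is constant from its first repetition on; as `dim (ker C) = d`, a
repetition happens by step `d`, hence `N d = N (d + 1)` is itself `A`-invariant. Rank–nullity turns
`s ≤ dim (N d)` into `rank ≤ n - s`, and the minor criterion is the characterisation of rank by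
nonvanishing minors. -/

theorem Submodule.finrank_add_le_finrank_of_lt_succ {K V : Type*} [Field K] [AddCommGroup V]
    [Module K V] [FiniteDimensional K V] {N : ℕ → Submodule K V} {m : ℕ}
    (hN : ∀ j < m, N (j + 1) < N j) : finrank K (N m) + m ≤ finrank K (N 0) := by
  induction m with
  | zero => simp
  | succ m ih =>
    have := finrank_lt_finrank_of_lt (hN m m.lt_succ_self)
    have := ih fun j hj => hN j (hj.trans m.lt_succ_self)
    omega

theorem exists_linearIndependent_comp_of_le_finrank_span {K V ι : Type*} [Field K]
    [AddCommGroup V] [Module K V] [Finite ι] (v : ι → V) {k : ℕ}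
    (hk : k ≤ finrank K (span K (Set.range v))) :
    ∃ c : Fin k → ι, LinearIndependent K (v ∘ c) := by
  obtain ⟨κ, a, ha, hspan, hli⟩ := exists_linearIndependent' K v
  have : Finite κ := Finite.of_injective a ha
  have : Fintype κ := Fintype.ofFinite κ
  rw [← hspan, finrank_span_eq_card hli] at hk
  obtain ⟨e⟩ : Nonempty (Fin k ↪ κ) := Function.Embedding.nonempty_of_card_le (by simpa using hk)
  exact ⟨a ∘ e, hli.comp e e.injective⟩

namespace LinearMap

variable {K V W : Type*} [Field K] [AddCommGroup V] [Module K V] [AddCommGroup W] [Module K W]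

def unobservableSubspace (g : V →ₗ[K] W) (f : Module.End K V) (k : ℕ) : Submodule K V :=
  ⨅ (i : ℕ) (_ : i ≤ k), ker (g ∘ₗ f ^ i)

variable (g : V →ₗ[K] W) (f : Module.End K V)

theorem mem_unobservableSubspace {k : ℕ} {v : V} :
    v ∈ g.unobservableSubspace f k ↔ ∀ i ≤ k, g ((f ^ i) v) = 0 := by
  simp [unobservableSubspace]

theorem unobservableSubspace_zero : g.unobservableSubspace f 0 = ker g := by
  ext v
  simp [mem_unobservableSubspace]

theorem unobservableSubspace_succ (k : ℕ) :
    g.unobservableSubspace f (k + 1) = ker g ⊓ (g.unobservableSubspace f k).comap f := by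
  ext v
  simp only [mem_unobservableSubspace, mem_inf, mem_ker, mem_comap, ← Module.End.mul_apply,
    ← pow_succ]
  constructor
  · intro h
    exact ⟨by simpa using h 0 (Nat.zero_le _), fun i hi => h (i + 1) (by omega)⟩
  · rintro ⟨h0, h⟩ (_ | i) hi
    · simpa using h0
    · exact h i (by omega)

theorem unobservableSubspace_antitone : Antitone (g.unobservableSubspace f) :=
  fun _ _ hab _ hv => (g.mem_unobservableSubspace f).2 fun i hi =>
    (g.mem_unobservableSubspace f).1 hv i (hi.trans hab)

theorem unobservableSubspace_le_ker (k : ℕ) : g.unobservableSubspace f k ≤ ker g :=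
  g.unobservableSubspace_zero f ▸ g.unobservableSubspace_antitone f (Nat.zero_le k)

theorem le_unobservableSubspace {U : Submodule K V} (hUg : U ≤ ker g) (hUf : U ≤ U.comap f)
    (k : ℕ) : U ≤ g.unobservableSubspace f k := by
  induction k with
  | zero => rwa [unobservableSubspace_zero]
  | succ k ih => rw [unobservableSubspace_succ]; exact le_inf hUg (hUf.trans (comap_mono ih))

variable {g f}

theorem unobservableSubspace_eq_of_succ_eq {k : ℕ}
    (h : g.unobservableSubspace f (k + 1) = g.unobservableSubspace f k) {j : ℕ} (hj : k ≤ j) :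
    g.unobservableSubspace f j = g.unobservableSubspace f k := by
  induction j, hj using Nat.le_induction with
  | base => rfl
  | succ j _ ih => rw [unobservableSubspace_succ, ih, ← unobservableSubspace_succ, h]

theorem unobservableSubspace_le_comap_of_succ_eq {k : ℕ}
    (h : g.unobservableSubspace f (k + 1) = g.unobservableSubspace f k) :
    g.unobservableSubspace f k ≤ (g.unobservableSubspace f k).comap f := by
  intro v hv
  rw [← h, unobservableSubspace_succ] at hv
  exact hv.2

theorem unobservableSubspace_succ_eq_of_finrank_ker_le [FiniteDimensional K V] {d : ℕ}
    (hd : finrank K (ker g) ≤ d) :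
    g.unobservableSubspace f (d + 1) = g.unobservableSubspace f d := by
  obtain ⟨k, hkd, hk⟩ : ∃ k ≤ d,
      g.unobservableSubspace f (k + 1) = g.unobservableSubspace f k := by
    by_contra! hne
    have := Submodule.finrank_add_le_finrank_of_lt_succ (m := d + 1) fun j hj =>
      lt_of_le_of_ne (g.unobservableSubspace_antitone f j.le_succ) (hne j (by omega))
    rw [unobservableSubspace_zero] at this
    omega
  rw [unobservableSubspace_eq_of_succ_eq hk (by omega), unobservableSubspace_eq_of_succ_eq hk hkd]

end LinearMap

namespace Matrix

variable {K m n : Type*} [Field K] [Fintype n]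

theorem rank_add_finrank_ker_mulVecLin (M : Matrix m n K) :
    M.rank + finrank K (LinearMap.ker M.mulVecLin) = Fintype.card n := by
  rw [rank, LinearMap.finrank_range_add_finrank_ker, finrank_fintype_fun_eq_card]

theorem mulVecLin_pow_apply [DecidableEq n] (A : Matrix n n K) (i : ℕ) (v : n → K) :
    (A.mulVecLin ^ i) v = (A ^ i) *ᵥ v := by
  induction i with
  | zero => simp
  | succ i ih => rw [pow_succ', Module.End.mul_apply, ih, pow_succ', ← mulVec_mulVec]; rfl

theorem exists_isUnit_submatrix_of_le_rank [Fintype m]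
    (M : Matrix m n K) {k : ℕ} (hk : k ≤ M.rank) :
    ∃ (r : Fin k → m) (c : Fin k → n), IsUnit (M.submatrix r c) := by
  rw [rank_eq_finrank_span_cols] at hk
  obtain ⟨c, hc⟩ := exists_linearIndependent_comp_of_le_finrank_span M.col hk
  have hrank : (M.submatrix id c).rank = k := by
    rw [← rank_transpose]
    simpa using LinearIndependent.rank_matrix (M := (M.submatrix id c)ᵀ) hc
  rw [rank_eq_finrank_span_row] at hrank
  obtain ⟨r, hr⟩ := exists_linearIndependent_comp_of_le_finrank_span (M.submatrix id c).row
    hrank.ge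
  exact ⟨r, c, linearIndependent_rows_iff_isUnit.mp hr⟩

theorem rank_le_iff_forall_det_submatrix_eq_zero [Fintype m] (M : Matrix m n K) (k : ℕ) :
    M.rank ≤ k ↔ ∀ (r : Fin (k + 1) → m) (c : Fin (k + 1) → n), (M.submatrix r c).det = 0 := by
  classical
  constructor
  · intro hM r c
    by_contra hdet
    have := (rank_of_det_ne_zero hdet).symm.trans_le (M.rank_submatrix_le r c)
    rw [Fintype.card_fin] at this
    omega
  · intro hdet
    by_contra! hM
    obtain ⟨r, c, hunit⟩ := M.exists_isUnit_submatrix_of_le_rank hM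
    exact ((isUnit_iff_isUnit_det _).mp hunit).ne_zero (hdet r c)

end Matrix

theorem ker_mulVecLin_kalmanMatrix {K : Type*} [Field K] {n d : ℕ}
    (C : Matrix (Fin (n - d)) (Fin n) K) (A : Matrix (Fin n) (Fin n) K) :
    LinearMap.ker (kalmanMatrix C A).mulVecLin =
      C.mulVecLin.unobservableSubspace A.mulVecLin d := by
  ext v
  simp only [LinearMap.mem_ker, LinearMap.mem_unobservableSubspace, mulVecLin_apply,
    mulVecLin_pow_apply, mulVec_mulVec]
  constructor
  · intro h i hi
    funext j
    exact congrFun h (⟨i, Nat.lt_succ_of_le hi⟩, j)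
  · intro h
    funext p
    exact congrFun (h p.1 (Nat.lt_succ_iff.mp p.1.2)) p.2

theorem stmt1_general {K : Type*} [Field K] (n d s : ℕ)
    (hd2 : d ≤ n - 1) (hs2 : s ≤ d)
    (C : Matrix (Fin (n - d)) (Fin n) K) (hC : C.rank = n - d)
    (A : Matrix (Fin n) (Fin n) K) :
    ((∃ W : Submodule K (Fin n → K), s ≤ Module.finrank K W ∧
        (∀ v ∈ W, C.mulVec v = 0) ∧ (∀ v ∈ W, A.mulVec v ∈ W))
      ↔ (kalmanMatrix C A).rank ≤ n - s)
    ∧ ((kalmanMatrix C A).rank ≤ n - s ↔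
        ∀ (r : Fin (n - s + 1) → Fin (d + 1) × Fin (n - d)) (c : Fin (n - s + 1) → Fin n),
          ((kalmanMatrix C A).submatrix r c).det = 0) := by
  have hker : finrank K (LinearMap.ker C.mulVecLin) ≤ d := by
    have := C.rank_add_finrank_ker_mulVecLin
    simp only [Fintype.card_fin] at this
    omega
  have hrank : (kalmanMatrix C A).rank
      + finrank K (C.mulVecLin.unobservableSubspace A.mulVecLin d) = n := by
    have := (kalmanMatrix C A).rank_add_finrank_ker_mulVecLin
    rwa [ker_mulVecLin_kalmanMatrix, Fintype.card_fin] at this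
  refine ⟨⟨?_, fun hs => ?_⟩, rank_le_iff_forall_det_submatrix_eq_zero _ _⟩
  · rintro ⟨W, hsW, hCW, hAW⟩
    have := finrank_mono (C.mulVecLin.le_unobservableSubspace A.mulVecLin hCW hAW d)
    omega
  · have hstab := LinearMap.unobservableSubspace_succ_eq_of_finrank_ker_le (f := A.mulVecLin) hker
    exact ⟨_, by omega, C.mulVecLin.unobservableSubspace_le_ker _ d,
      LinearMap.unobservableSubspace_le_comap_of_succ_eq hstab⟩

/-- For `1 ≤ s ≤ d`, an `n × n` matrix `A` has an `A`-invariant subspace of dimension at least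
`s` contained in `L = ker C` if and only if the Kalman matrix has rank at most `n - s`, if and
only if all `(n-s+1) × (n-s+1)` minors of the Kalman matrix vanish. -/
theorem stmt1 {K : Type*} [Field K] [IsAlgClosed K] (n d s : ℕ)
    (hn : 2 ≤ n) (hd1 : 1 ≤ d) (hd2 : d ≤ n - 1) (hs1 : 1 ≤ s) (hs2 : s ≤ d)
    (C : Matrix (Fin (n - d)) (Fin n) K) (hC : C.rank = n - d)
    (A : Matrix (Fin n) (Fin n) K) :
    ((∃ W : Submodule K (Fin n → K), s ≤ Module.finrank K W ∧
        (∀ v ∈ W, C.mulVec v = 0) ∧ (∀ v ∈ W, A.mulVec v ∈ W))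
      ↔ (kalmanMatrix C A).rank ≤ n - s)
    ∧ ((kalmanMatrix C A).rank ≤ n - s ↔
        ∀ (r : Fin (n - s + 1) → Fin (d + 1) × Fin (n - d)) (c : Fin (n - s + 1) → Fin n),
          ((kalmanMatrix C A).submatrix r c).det = 0) :=
  stmt1_general n d s hd2 hs2 C hC A
end

section
/- Let K be a field, n ≥ 2, 1 ≤ d ≤ n−1, and take C = (0_{(n−d)×d} | I_{n−d}), the (n−d)×n matrix consisting of a zero block followed by an identity block. Then for every n×n matrix A over K, the rank of the Kalman matrix of A equals (n−d) plus the rank of the small Kalman matrix of A, and the rank of the small Kalman matrix of A equals the rank of the reduced Kalman matrix of A. -/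
open Matrix

/-- The `(n-d) × n` matrix `C = (0 | I)` consisting of an `(n-d) × d` zero block followed by an
`(n-d) × (n-d)` identity block. -/
def zeroIdMatrix (K : Type*) [CommRing K] (n d : ℕ) : Matrix (Fin (n - d)) (Fin n) K :=
  fun i j => if (j : ℕ) = d + (i : ℕ) then 1 else 0

/-- The small Kalman matrix of `A`: the `d(n-d) × d` matrix obtained by vertically stacking the
blocks `[A^i]` for `i = 1, …, d`, where `[M]` is the submatrix of `M` formed by the last `n - d`
rows and the first `d` columns. -/
noncomputable def smallKalman {K : Type*} [CommRing K] {n d : ℕ} (hdn : d ≤ n)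
    (A : Matrix (Fin n) (Fin n) K) : Matrix (Fin d × Fin (n - d)) (Fin d) K :=
  fun p j =>
    (A ^ ((p.1 : ℕ) + 1)) ⟨d + (p.2 : ℕ), by have := p.2.isLt; omega⟩
      ⟨(j : ℕ), by have := j.isLt; omega⟩

/-- The reduced Kalman matrix built from a `d × d` block `A11` and an `m × d` block `A21`: the
vertical stacking of the blocks `A21 * A11 ^ i` for `i = 0, 1, …, d - 1`. -/
noncomputable def reducedKalman {K : Type*} [CommRing K] {d m : ℕ}
    (A11 : Matrix (Fin d) (Fin d) K) (A21 : Matrix (Fin m) (Fin d) K) :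
    Matrix (Fin d × Fin m) (Fin d) K :=
  fun p j => (A21 * A11 ^ (p.1 : ℕ)) p.2 j

/-- The upper-left `d × d` block of an `n × n` matrix. -/
def blockUL {K : Type*} {n d : ℕ} (hdn : d ≤ n) (A : Matrix (Fin n) (Fin n) K) :
    Matrix (Fin d) (Fin d) K :=
  fun i j => A ⟨(i : ℕ), by have := i.isLt; omega⟩ ⟨(j : ℕ), by have := j.isLt; omega⟩

/-- The lower-left `(n-d) × d` block of an `n × n` matrix. -/
def blockLL {K : Type*} {n d : ℕ} (hdn : d ≤ n) (A : Matrix (Fin n) (Fin n) K) :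
    Matrix (Fin (n - d)) (Fin d) K :=
  fun i j => A ⟨d + (i : ℕ), by have := i.isLt; omega⟩ ⟨(j : ℕ), by have := j.isLt; omega⟩

/-!
Since `C = (0 | I)`, the block `C * A ^ i` of the Kalman matrix consists of the last `n - d` rows
of `A ^ i`; for `i = 0` these are the unit vectors `e_{d+1}, …, e_n`, which span the kernel of the
restriction `π` to the first `d` coordinates. Hence the row space `R` of the Kalman matrix contains
`ker π`, and `dim R = dim ker π + dim π(R) = (n - d) + rank [small Kalman matrix]`, because `π`
maps the rows of the blocks `i ≥ 1` to the rows of the small Kalman matrix.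

For the second identity, the block product `A ^ (k + 2) = A ^ (k + 1) * A` gives
`[A ^ (k + 2)] = [A ^ (k + 1)] * A11 + (A ^ (k + 1))₂₂ * A21`, while trivially
`A21 * A11 ^ (k + 1) = (A21 * A11 ^ k) * A11`. Both sequences start with `A21`, and for any such
sequence the span of the rows of its first `k + 1` terms is
`rowspan A21 + (span of the rows of the first k terms) * A11`; by induction the two spans agree.
-/

open Submodule Module

section BlockDecomposition

variable {n d : ℕ}

def lowerIndex (hdn : d ≤ n) (r : Fin (n - d)) : Fin n := ⟨d + r, by omega⟩

theorem sum_fin_eq_sum_castLE_add_sum_lowerIndex {M : Type*} [AddCommMonoid M] (hdn : d ≤ n)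
    (f : Fin n → M) :
    ∑ x, f x
      = ∑ i : Fin d, f (Fin.castLE hdn i) + ∑ r : Fin (n - d), f (lowerIndex hdn r) := by
  rw [← Fintype.sum_equiv (finCongr (Nat.add_sub_of_le hdn)) (fun x => f (finCongr _ x)) f
    fun _ => rfl, Fin.sum_univ_add]
  rfl

theorem Matrix.submatrix_mul_eq_add {α l o l' o' : Type*} [NonUnitalNonAssocSemiring α]
    (hdn : d ≤ n) (M : Matrix l (Fin n) α) (N : Matrix (Fin n) o α) (r : l' → l)
    (c : o' → o) :
    (M * N).submatrix r c = M.submatrix r (Fin.castLE hdn) * N.submatrix (Fin.castLE hdn) c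
      + M.submatrix r (lowerIndex hdn) * N.submatrix (lowerIndex hdn) c := by
  ext i j
  simp only [submatrix_apply, add_apply, mul_apply,
    sum_fin_eq_sum_castLE_add_sum_lowerIndex hdn]

theorem blockLL_mul {α : Type*} [NonUnitalNonAssocSemiring α] (hdn : d ≤ n)
    (M N : Matrix (Fin n) (Fin n) α) :
    blockLL hdn (M * N) = blockLL hdn M * blockUL hdn N
      + M.submatrix (lowerIndex hdn) (lowerIndex hdn) * blockLL hdn N :=
  submatrix_mul_eq_add hdn M N _ _

end BlockDecomposition

section RowSpan

variable {K : Type*} [CommRing K] {m ι ι' : Type*}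

theorem Matrix.span_range_mul [Fintype ι] (X : Matrix m ι K) (N : Matrix ι ι' K) :
    span K (Set.range (X * N)) = (span K (Set.range X)).map N.vecMulLinear := by
  rw [map_span, ← Set.range_comp (f := X)]
  rfl

theorem Matrix.span_range_mul_le_right [Fintype m] (Y : Matrix m m K) (Z : Matrix m ι K) :
    span K (Set.range (Y * Z)) ≤ span K (Set.range Z) := by
  rw [span_le]
  rintro _ ⟨i, rfl⟩
  exact (range_vecMulLinear Z).le ⟨Y i, rfl⟩

theorem Matrix.span_range_le_of_eq_add_mul [Fintype m] {X Y Z : Matrix m ι K}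
    {W : Matrix m m K} (h : X = Y + W * Z) :
    span K (Set.range X) ≤ span K (Set.range Y) ⊔ span K (Set.range Z) := by
  rw [span_le, h]
  rintro _ ⟨i, rfl⟩
  exact add_mem_sup (subset_span ⟨i, rfl⟩)
    (span_range_mul_le_right W Z (subset_span ⟨i, rfl⟩))

def Matrix.stackRows {α : Type*} (P : ℕ → Matrix m ι α) (k : ℕ) :
    Matrix (Fin k × m) ι α :=
  fun p => P p.1 p.2

theorem Matrix.span_range_stackRows (P : ℕ → Matrix m ι K) (k : ℕ) :
    span K (Set.range (stackRows P k)) = ⨆ j < k, span K (Set.range (P j)) := by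
  rw [← span_iUnion₂]
  congr 1
  ext v
  simp only [Set.mem_iUnion, exists_prop]
  constructor
  · rintro ⟨⟨i, r⟩, rfl⟩
    exact ⟨i, i.isLt, r, rfl⟩
  · rintro ⟨i, hi, r, rfl⟩
    exact ⟨(⟨i, hi⟩, r), rfl⟩

variable [Fintype m] [Fintype ι] (N : Matrix ι ι K)

theorem Matrix.iSup_span_range_succ {P : ℕ → Matrix m ι K} {M : ℕ → Matrix m m K}
    (hP : ∀ j, P (j + 1) = P j * N + M j * P 0) (k : ℕ) :
    ⨆ j < k + 1, span K (Set.range (P j))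
      = span K (Set.range (P 0)) ⊔ (⨆ j < k, span K (Set.range (P j))).map N.vecMulLinear := by
  simp only [Nat.iSup_lt_succ', Submodule.map_iSup, ← span_range_mul]
  refine le_antisymm (sup_le le_sup_left (iSup₂_le fun j hj => ?_))
    (sup_le le_sup_left (iSup₂_le fun j hj => ?_))
  · calc span K (Set.range (P (j + 1)))
        ≤ span K (Set.range (P j * N)) ⊔ span K (Set.range (P 0)) :=
          span_range_le_of_eq_add_mul (hP j)
      _ ≤ _ := sup_le (le_sup_of_le_right (le_iSup₂_of_le j hj le_rfl)) le_sup_left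
  · calc span K (Set.range (P j * N))
        ≤ span K (Set.range (P (j + 1))) ⊔ span K (Set.range (P 0)) :=
          span_range_le_of_eq_add_mul (W := -M j) (by rw [hP, Matrix.neg_mul, add_neg_cancel_right])
      _ ≤ _ := sup_le (le_sup_of_le_right (le_iSup₂_of_le j hj le_rfl)) le_sup_left

theorem Matrix.iSup_span_range_eq_of_recurrence {P Q : ℕ → Matrix m ι K}
    {M M' : ℕ → Matrix m m K}
    (hP : ∀ j, P (j + 1) = P j * N + M j * P 0) (hQ : ∀ j, Q (j + 1) = Q j * N + M' j * Q 0)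
    (h0 : P 0 = Q 0) (k : ℕ) :
    ⨆ j < k, span K (Set.range (P j)) = ⨆ j < k, span K (Set.range (Q j)) := by
  induction k with
  | zero => simp
  | succ k ih => rw [iSup_span_range_succ N hP, iSup_span_range_succ N hQ, ih, h0]

end RowSpan

theorem Submodule.finrank_map_add_finrank_ker_of_ker_le {K V W : Type*} [Field K]
    [AddCommGroup V] [Module K V] [FiniteDimensional K V] [AddCommGroup W] [Module K W]
    (f : V →ₗ[K] W) {R : Submodule K V} (h : LinearMap.ker f ≤ R) :
    finrank K (R.map f) + finrank K (LinearMap.ker f) = finrank K R := by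
  rw [← LinearMap.range_domRestrict, ← (comapSubtypeEquivOfLe h).finrank_eq,
    ← LinearMap.ker_domRestrict]
  exact (f.domRestrict R).finrank_range_add_finrank_ker

theorem LinearMap.finrank_ker_funLeft {K m n : Type*} [Field K] [Fintype m] [Fintype n]
    {f : m → n} (hf : Function.Injective f) :
    finrank K (LinearMap.ker (LinearMap.funLeft K K f)) = Fintype.card n - Fintype.card m := by
  have h := (LinearMap.funLeft K K f).finrank_range_add_finrank_ker
  rw [LinearMap.range_eq_top.2 (funLeft_surjective_of_injective K K f hf), finrank_top,
    finrank_fintype_fun_eq_card, finrank_fintype_fun_eq_card] at h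
  omega

section Kalman

variable {K : Type*} [Field K] {n d : ℕ} (hdn : d ≤ n) (A : Matrix (Fin n) (Fin n) K)

theorem kalmanMatrix_apply {m : ℕ} (C : Matrix (Fin (n - m)) (Fin n) K) (i : Fin (m + 1))
    (r : Fin (n - m)) : kalmanMatrix C A (i, r) = C r ᵥ* A ^ (i : ℕ) :=
  rfl

theorem zeroIdMatrix_apply (r : Fin (n - d)) :
    zeroIdMatrix K n d r = Pi.single (lowerIndex hdn r) 1 := by
  funext j
  simp [zeroIdMatrix, Pi.single_apply, lowerIndex, Fin.ext_iff]

theorem ker_funLeft_castLE_le_span_kalmanMatrix :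
    LinearMap.ker (LinearMap.funLeft K K (Fin.castLE hdn))
      ≤ span K (Set.range (kalmanMatrix (zeroIdMatrix K n d) A)) := by
  intro v hv
  have hv_upper : ∀ i, v (Fin.castLE hdn i) = 0 := fun i => congrFun hv i
  rw [pi_eq_sum_univ' v, sum_fin_eq_sum_castLE_add_sum_lowerIndex hdn]
  simp only [hv_upper, zero_smul, Finset.sum_const_zero, zero_add]
  refine sum_mem fun r _ => smul_mem _ _ (subset_span ⟨(0, r), ?_⟩)
  rw [kalmanMatrix_apply, Fin.val_zero, pow_zero, vecMul_one, zeroIdMatrix_apply hdn]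

theorem map_funLeft_castLE_span_kalmanMatrix :
    (span K (Set.range (kalmanMatrix (zeroIdMatrix K n d) A))).map
        (LinearMap.funLeft K K (Fin.castLE hdn))
      = span K (Set.range (smallKalman hdn A)) := by
  have h_succ (i : Fin d) (r : Fin (n - d)) :
      LinearMap.funLeft K K (Fin.castLE hdn) (kalmanMatrix (zeroIdMatrix K n d) A (i.succ, r))
        = smallKalman hdn A (i, r) := by
    rw [kalmanMatrix_apply, zeroIdMatrix_apply hdn, single_one_vecMul]
    rfl
  rw [map_span, ← Set.range_comp (f := kalmanMatrix (zeroIdMatrix K n d) A)]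
  apply le_antisymm <;> rw [span_le]
  · rintro _ ⟨⟨i, r⟩, rfl⟩
    induction i using Fin.cases with
    | zero =>
      have h_zero : LinearMap.funLeft K K (Fin.castLE hdn) (zeroIdMatrix K n d r) = 0 := by
        funext j
        simp only [LinearMap.funLeft_apply, zeroIdMatrix, Fin.val_castLE, Pi.zero_apply,
          ite_eq_right_iff, one_ne_zero, imp_false]
        omega
      change LinearMap.funLeft K K (Fin.castLE hdn) (zeroIdMatrix K n d r ᵥ* A ^ 0) ∈ _
      rw [pow_zero, vecMul_one, h_zero]
      exact zero_mem _
    | succ i => exact subset_span ⟨(i, r), (h_succ i r).symm⟩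
  · rintro _ ⟨⟨i, r⟩, rfl⟩
    exact subset_span ⟨(i.succ, r), h_succ i r⟩

theorem rank_kalmanMatrix_zeroIdMatrix :
    (kalmanMatrix (zeroIdMatrix K n d) A).rank = (n - d) + (smallKalman hdn A).rank := by
  rw [rank_eq_finrank_span_row, rank_eq_finrank_span_row, row_def, row_def,
    ← finrank_map_add_finrank_ker_of_ker_le _ (ker_funLeft_castLE_le_span_kalmanMatrix hdn A),
    map_funLeft_castLE_span_kalmanMatrix, LinearMap.finrank_ker_funLeft (Fin.castLE_injective hdn),
    Fintype.card_fin, Fintype.card_fin, add_comm]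

theorem span_range_smallKalman :
    span K (Set.range (smallKalman hdn A))
      = span K (Set.range (reducedKalman (blockUL hdn A) (blockLL hdn A))) := by
  have hP (j : ℕ) : blockLL hdn (A ^ (j + 1 + 1)) = blockLL hdn (A ^ (j + 1)) * blockUL hdn A
      + (A ^ (j + 1)).submatrix (lowerIndex hdn) (lowerIndex hdn) * blockLL hdn (A ^ (0 + 1)) := by
    rw [pow_succ A (j + 1), blockLL_mul, zero_add, pow_one]
  have hQ (j : ℕ) : blockLL hdn A * blockUL hdn A ^ (j + 1)
      = blockLL hdn A * blockUL hdn A ^ j * blockUL hdn A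
        + (0 : Matrix (Fin (n - d)) (Fin (n - d)) K) * (blockLL hdn A * blockUL hdn A ^ 0) := by
    rw [Matrix.zero_mul, add_zero, pow_succ, Matrix.mul_assoc]
  have h0 : blockLL hdn (A ^ (0 + 1)) = blockLL hdn A * blockUL hdn A ^ 0 := by
    rw [zero_add, pow_one, pow_zero, Matrix.mul_one]
  change span K (Set.range (stackRows (fun j => blockLL hdn (A ^ (j + 1))) d))
    = span K (Set.range (stackRows (fun j => blockLL hdn A * blockUL hdn A ^ j) d))
  rw [span_range_stackRows, span_range_stackRows]
  exact iSup_span_range_eq_of_recurrence _ hP hQ h0 d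

end Kalman

/-- For `C = (0 | I)`, the rank of the Kalman matrix of `A` equals `(n - d)` plus the rank of the
small Kalman matrix of `A`, and the rank of the small Kalman matrix equals the rank of the reduced
Kalman matrix. -/
theorem stmt2 {K : Type*} [Field K] (n d : ℕ) (hd2 : d ≤ n - 1)
    (A : Matrix (Fin n) (Fin n) K) :
    (kalmanMatrix (zeroIdMatrix K n d) A).rank
        = (n - d) + (smallKalman (show d ≤ n by omega) A).rank
    ∧ (smallKalman (show d ≤ n by omega) A).rank
        = (reducedKalman (blockUL (show d ≤ n by omega) A)
            (blockLL (show d ≤ n by omega) A)).rank := by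
  refine ⟨rank_kalmanMatrix_zeroIdMatrix _ A, ?_⟩
  rw [rank_eq_finrank_span_row, rank_eq_finrank_span_row, row_def, row_def, span_range_smallKalman]
end

section
/- Let K be a field, n ≥ 2, 1 ≤ d ≤ n−1, and let C be an (n−d)×n matrix over K of rank n−d. For every n×n matrix A over K, the kernel of the Kalman matrix of A (viewed as a linear map K^n → K^{(d+1)(n−d)}) is an A-invariant subspace of K^n. -/
/-!
The kernel of the Kalman matrix is the `d`-th term of the decreasing chain
`W k = ⋂_{i ≤ k} ker (C A^i)`, which satisfies `W (k+1) = ker C ⊓ A⁻¹(W k)`. Hence once two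
consecutive terms agree the chain is constant from there on. Since `W 0 = ker C` has dimension
`n - rank C ≤ d`, the chain cannot drop strictly `d + 1` times, so `W (d+1) = W d`, and
`v ∈ W (d+1)` means exactly `v ∈ ker C` and `A v ∈ W d`.
-/

open Matrix

open Module

theorem Submodule.exists_le_finrank_succ_eq_of_antitone {K V : Type*} [DivisionRing K]
    [AddCommGroup V] [Module K V] [FiniteDimensional K V] {W : ℕ → Submodule K V}
    (hW : Antitone W) : ∃ k ≤ finrank K (W 0), W (k + 1) = W k := by
  by_contra! hne
  have hdrop : ∀ k ≤ finrank K (W 0) + 1, finrank K (W k) + k ≤ finrank K (W 0) := by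
    intro k
    induction k with
    | zero => simp
    | succ k ih =>
      intro hk
      have hlt : W (k + 1) < W k := lt_of_le_of_ne (hW k.le_succ) (hne k (by omega))
      have := Submodule.finrank_lt_finrank_of_lt hlt
      have := ih (by omega)
      omega
  have := hdrop _ le_rfl
  omega

section KalmanKernel

variable {R V M : Type*} [Semiring R] [AddCommMonoid V] [Module R V] [AddCommMonoid M]
  [Module R M] (c : V →ₗ[R] M) (a : Module.End R V)

def kalmanKernel (k : ℕ) : Submodule R V :=
  ⨅ i ≤ k, LinearMap.ker (c ∘ₗ a ^ i)

variable {c a}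

theorem mem_kalmanKernel {k : ℕ} {v : V} :
    v ∈ kalmanKernel c a k ↔ ∀ i ≤ k, c ((a ^ i) v) = 0 := by
  simp [kalmanKernel]

theorem kalmanKernel_antitone : Antitone (kalmanKernel c a) :=
  fun _ _ hkl _ hv => mem_kalmanKernel.2 fun i hi => mem_kalmanKernel.1 hv i (hi.trans hkl)

theorem kalmanKernel_zero : kalmanKernel c a 0 = LinearMap.ker c := by
  ext v
  simp [mem_kalmanKernel]

theorem kalmanKernel_succ (k : ℕ) :
    kalmanKernel c a (k + 1) = LinearMap.ker c ⊓ (kalmanKernel c a k).comap a := by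
  ext v
  simp only [Submodule.mem_inf, Submodule.mem_comap, LinearMap.mem_ker, mem_kalmanKernel,
    ← Module.End.mul_apply, ← pow_succ]
  constructor
  · intro h
    exact ⟨by simpa using h 0 (Nat.zero_le _), fun i hi => h (i + 1) (by omega)⟩
  · rintro ⟨h0, h⟩ (_ | i) hi
    · simpa using h0
    · exact h i (by omega)

theorem kalmanKernel_add_eq_of_succ_eq {k : ℕ} (h : kalmanKernel c a (k + 1) = kalmanKernel c a k)
    (j : ℕ) : kalmanKernel c a (k + j) = kalmanKernel c a k := by
  induction j with
  | zero => rfl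
  | succ j ih => rw [← add_assoc, kalmanKernel_succ, ih, ← kalmanKernel_succ, h]

end KalmanKernel

section FiniteDimensional

variable {K V M : Type*} [DivisionRing K] [AddCommGroup V] [Module K V] [FiniteDimensional K V]
  [AddCommGroup M] [Module K M] {c : V →ₗ[K] M} {a : Module.End K V}

theorem kalmanKernel_succ_eq_of_finrank_ker_le {d : ℕ}
    (hd : finrank K (LinearMap.ker c) ≤ d) : kalmanKernel c a (d + 1) = kalmanKernel c a d := by
  obtain ⟨k, hk, hstab⟩ :=
    Submodule.exists_le_finrank_succ_eq_of_antitone (kalmanKernel_antitone (c := c) (a := a))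
  rw [kalmanKernel_zero] at hk
  obtain ⟨j, rfl⟩ := Nat.exists_eq_add_of_le (hk.trans hd)
  exact (kalmanKernel_add_eq_of_succ_eq hstab (j + 1)).trans
    (kalmanKernel_add_eq_of_succ_eq hstab j).symm

theorem kalmanKernel_mapsTo_of_finrank_ker_le {d : ℕ}
    (hd : finrank K (LinearMap.ker c) ≤ d) {v : V} (hv : v ∈ kalmanKernel c a d) :
    a v ∈ kalmanKernel c a d := by
  rw [← kalmanKernel_succ_eq_of_finrank_ker_le hd, kalmanKernel_succ] at hv
  exact hv.2

end FiniteDimensional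

theorem Matrix.rank_add_finrank_ker_mulVecLin_s3 {K m n : Type*} [Field K] [Fintype n]
    (C : Matrix m n K) : C.rank + finrank K (LinearMap.ker C.mulVecLin) = Fintype.card n := by
  rw [Matrix.rank, LinearMap.finrank_range_add_finrank_ker, finrank_fintype_fun_eq_card]

theorem ker_kalmanMatrix_mulVecLin {K : Type*} [CommRing K] {n d : ℕ}
    (C : Matrix (Fin (n - d)) (Fin n) K) (A : Matrix (Fin n) (Fin n) K) :
    LinearMap.ker (kalmanMatrix C A).mulVecLin = kalmanKernel C.mulVecLin A.mulVecLin d := by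
  have hpow (i : ℕ) : A.mulVecLin ^ i = (A ^ i).mulVecLin := (Matrix.toLin'_pow A i).symm
  ext v
  simp only [LinearMap.mem_ker, mem_kalmanKernel, hpow, mulVecLin_apply, mulVec_mulVec, funext_iff]
  constructor
  · intro h i hi r
    exact h (⟨i, by omega⟩, r)
  · rintro h ⟨i, r⟩
    exact h i (by omega) r

theorem stmt3_general {K : Type*} [Field K] (n d : ℕ)
    (C : Matrix (Fin (n - d)) (Fin n) K) (hC : C.rank = n - d)
    (A : Matrix (Fin n) (Fin n) K) :
    ∀ v ∈ LinearMap.ker (kalmanMatrix C A).mulVecLin,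
      A.mulVec v ∈ LinearMap.ker (kalmanMatrix C A).mulVecLin := by
  have hker : finrank K (LinearMap.ker C.mulVecLin) ≤ d := by
    have := C.rank_add_finrank_ker_mulVecLin_s3
    rw [hC, Fintype.card_fin] at this
    omega
  intro v hv
  rw [ker_kalmanMatrix_mulVecLin] at hv ⊢
  exact kalmanKernel_mapsTo_of_finrank_ker_le hker hv

/-- The kernel of the Kalman matrix of `A` (viewed as a linear map `K^n → K^{(d+1)(n-d)}`) is an
`A`-invariant subspace of `K^n`. -/
theorem stmt3 {K : Type*} [Field K] (n d : ℕ) (hn : 2 ≤ n) (hd1 : 1 ≤ d) (hd2 : d ≤ n - 1)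
    (C : Matrix (Fin (n - d)) (Fin n) K) (hC : C.rank = n - d)
    (A : Matrix (Fin n) (Fin n) K) :
    ∀ v ∈ LinearMap.ker (kalmanMatrix C A).mulVecLin,
      A.mulVec v ∈ LinearMap.ker (kalmanMatrix C A).mulVecLin :=
  stmt3_general n d C hC A
end
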